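/- Let {Ψ(z) : z ∈ ℂ₊} be an analytic family of bounded operators on L²(M, μ) with ‖Ψ(z)‖_{2→2} ≤ 1 on ℂ₊. If for some C ≥ 1 and a > 0 one has |⟨Ψ(t)f₁, f₂⟩| ≤ C·e^{at}·e^{-r²/(4t)}·‖f₁‖₂‖f₂‖₂ for all t > 0 and f₁, f₂ supported in balls at mutual distance r, then in fact |⟨Ψ(t)f₁, f₂⟩| ≤ e^{-r²/(4t)}·‖f₁‖₂‖f₂‖₂, i.e. the Davies-Gaffney estimate holds with constant 1 and no exponential growth factor. -/

import Mathlib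

open MeasureTheory

/-- Distance between two subsets of a metric space. -/
noncomputable def setDist {M : Type*} [PseudoMetricSpace M] (U₁ U₂ : Set M) : ℝ :=
  sInf ((fun q : M × M => dist q.1 q.2) '' (U₁ ×ˢ U₂))

/-!
Write `γ = r² / 4`. The scalar function `F z = ⟪f₂, Ψ z f₁⟫` is holomorphic and bounded by
`B = ‖f₁‖ ‖f₂‖` on the right half-plane, and the hypothesis says `F t = O(exp (-γ / t))` as
`t → 0⁺`: the prefactor `C e^{at}` stays bounded there. For `δ > 0` the function
`G w = F (1 / (δ + w)) · exp (γ (δ + w))` is holomorphic on a neighbourhood of the closed right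
half-plane, bounded by `B e^{γδ}` on the imaginary axis and bounded on the positive real axis, so
by Phragmén–Lindelöf `|G| ≤ B e^{γδ}` on the whole half-plane. Evaluating at `w = 1 / t - δ` and
letting `δ → 0` gives `|F t| ≤ B e^{-γ/t}`.
-/

open Complex Filter Topology Asymptotics

lemma Complex.inv_re_pos {z : ℂ} (hz : 0 < z.re) : 0 < z⁻¹.re := by
  rw [inv_re]
  exact div_pos hz (normSq_pos.2 fun h => by simp [h] at hz)

section PhragmenLindelof

variable {F : ℂ → ℂ} {B γ δ : ℝ}

lemma norm_comp_inv_mul_exp (w : ℂ) :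
    ‖F (δ + w)⁻¹ * exp (γ * (δ + w))‖ = ‖F (δ + w)⁻¹‖ * Real.exp (γ * (δ + w.re)) := by
  rw [norm_mul, norm_exp]; simp

lemma isBigO_exp_neg_div_of_norm_le {K a : ℝ}
    (h : ∀ t : ℝ, 0 < t → ‖F t‖ ≤ K * Real.exp (a * t) * Real.exp (-γ / t)) :
    (fun t : ℝ => F t) =O[𝓝[>] 0] fun t => Real.exp (-γ / t) := by
  have hprefactor : (fun t => K * Real.exp (a * t)) =O[𝓝[>] 0] fun _ => (1 : ℝ) :=
    ((Continuous.tendsto (by fun_prop) 0).mono_left nhdsWithin_le_nhds).isBigO_one ℝ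
  refine .trans (.of_bound' ?_) (by simpa using hprefactor.mul (isBigO_refl _ _))
  filter_upwards [self_mem_nhdsWithin] with t (ht : 0 < t)
  exact (h t ht).trans (le_abs_self _)

lemma isBoundedUnder_norm_comp_inv_mul_exp
    (hO : (fun t : ℝ => F t) =O[𝓝[>] 0] fun t => Real.exp (-γ / t)) :
    IsBoundedUnder (· ≤ ·) atTop fun x : ℝ => ‖F (δ + x)⁻¹ * exp (γ * (δ + x))‖ := by
  obtain ⟨c, hc⟩ := hO.bound
  have hs : Tendsto (fun x : ℝ => (δ + x)⁻¹) atTop (𝓝[>] 0) :=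
    tendsto_inv_atTop_nhdsGT_zero.comp (tendsto_atTop_add_const_left _ δ tendsto_id)
  refine isBoundedUnder_of_eventually_le (a := c) ?_
  filter_upwards [hs.eventually hc] with x hx
  rw [norm_comp_inv_mul_exp, ofReal_re, show ((δ : ℂ) + x)⁻¹ = ((δ + x)⁻¹ : ℝ) by push_cast; rfl]
  rw [Real.norm_eq_abs, Real.abs_exp, div_inv_eq_mul] at hx
  calc _ ≤ c * Real.exp (-γ * (δ + x)) * Real.exp (γ * (δ + x)) := by gcongr
    _ = c := by rw [mul_assoc, ← Real.exp_add]; simp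

lemma norm_comp_inv_mul_exp_le (hδ : 0 < δ) (hd : DifferentiableOn ℂ F {z | 0 < z.re})
    (hb : ∀ z : ℂ, 0 < z.re → ‖F z‖ ≤ B)
    (hO : (fun t : ℝ => F t) =O[𝓝[>] 0] fun t => Real.exp (-γ / t))
    {w : ℂ} (hw : 0 ≤ w.re) :
    ‖F (δ + w)⁻¹ * exp (γ * (δ + w))‖ ≤ B * Real.exp (γ * δ) := by
  have hre (w : ℂ) (hw : -δ < w.re) : 0 < ((δ : ℂ) + w).re := by
    simp only [add_re, ofReal_re]; linarith
  have hdG : DifferentiableOn ℂ (fun w : ℂ => F (δ + w)⁻¹ * exp (γ * (δ + w)))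
      {w | -δ < w.re} := by
    refine (hd.comp ?_ fun w hw => inv_re_pos (hre w hw)).mul (by fun_prop)
    exact (differentiableOn_const _).add differentiableOn_id |>.inv
      fun w hw h => by simpa [h] using hre w hw
  refine PhragmenLindelof.right_half_plane_of_bounded_on_real
    (f := fun w : ℂ => F (δ + w)⁻¹ * exp (γ * (δ + w))) ?_ ?_
    (isBoundedUnder_norm_comp_inv_mul_exp hO) (fun y => ?_) hw
  · refine hdG.mono ?_ |>.diffContOnCl
    rw [closure_setOfPred_lt_re]
    exact fun w (hw : 0 ≤ w.re) => show -δ < w.re by linarith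
  · refine ⟨1, one_lt_two, |γ|, .of_bound (B * Real.exp (γ * δ)) ?_⟩
    refine eventually_inf_principal.2 <| .of_forall fun w (hw : 0 < w.re) => ?_
    have hγw : γ * w.re ≤ |γ| * ‖w‖ ^ (1 : ℝ) := by
      rw [Real.rpow_one]
      exact (le_abs_self _).trans (by rw [abs_mul]; gcongr; exact abs_re_le_norm w)
    calc _ = ‖F (δ + w)⁻¹‖ * Real.exp (γ * δ + γ * w.re) := by
          rw [norm_comp_inv_mul_exp, mul_add]
      _ ≤ B * Real.exp (γ * δ + |γ| * ‖w‖ ^ (1 : ℝ)) := by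
        gcongr
        · exact (norm_nonneg _).trans (hb 1 (by simp))
        · exact hb _ (inv_re_pos (hre w (by linarith)))
      _ = _ := by rw [Real.exp_add, Real.norm_eq_abs, Real.abs_exp, mul_assoc]
  · rw [norm_comp_inv_mul_exp]
    simpa using mul_le_mul_of_nonneg_right (hb _ (inv_re_pos (hre _ (by simpa using hδ))))
      (Real.exp_nonneg (γ * δ))

theorem norm_le_mul_exp_neg_div_of_isBigO (hd : DifferentiableOn ℂ F {z | 0 < z.re})
    (hb : ∀ z : ℂ, 0 < z.re → ‖F z‖ ≤ B)
    (hO : (fun t : ℝ => F t) =O[𝓝[>] 0] fun t => Real.exp (-γ / t))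
    {t : ℝ} (ht : 0 < t) : ‖F t‖ ≤ B * Real.exp (-γ / t) := by
  have hshift : ∀ δ ∈ Set.Ioc 0 t⁻¹, ‖F t‖ * Real.exp (γ / t) ≤ B * Real.exp (γ * δ) := by
    rintro δ ⟨hδ, hδt⟩
    have := norm_comp_inv_mul_exp_le hδ hd hb hO (w := (t : ℂ)⁻¹ - δ)
      (by simpa [← ofReal_inv] using hδt)
    rwa [add_sub_cancel, inv_inv, norm_mul, norm_exp, ← ofReal_inv, ← ofReal_mul, ofReal_re,
      ← div_eq_mul_inv] at this
  have hlim : Tendsto (fun δ => B * Real.exp (γ * δ)) (𝓝[>] 0) (𝓝 B) :=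
    (Continuous.tendsto' (by fun_prop) 0 B (by simp)).mono_left nhdsWithin_le_nhds
  have hle : ‖F t‖ * Real.exp (γ / t) ≤ B :=
    ge_of_tendsto hlim (mem_of_superset (Ioc_mem_nhdsGT (inv_pos.2 ht)) hshift)
  rwa [neg_div, Real.exp_neg, ← div_eq_mul_inv, le_div_iff₀ (Real.exp_pos _)]

end PhragmenLindelof

theorem davies_gaffney_self_improvement_general
    {M : Type*} [MetricSpace M]
    [MeasurableSpace M] (μ : Measure M)
    (Ψ : ℂ → (Lp ℂ 2 μ →L[ℂ] Lp ℂ 2 μ))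
    (C a : ℝ)
    (hΨanal : DifferentiableOn ℂ Ψ {z : ℂ | 0 < z.re})
    (hΨcontr : ∀ z : ℂ, 0 < z.re → ‖Ψ z‖ ≤ 1)
    (hweak : ∀ (x₁ x₂ : M) (r₁ r₂ : ℝ) (f₁ f₂ : Lp ℂ 2 μ),
      (∀ᵐ x ∂μ, x ∉ Metric.ball x₁ r₁ → f₁ x = 0) →
      (∀ᵐ x ∂μ, x ∉ Metric.ball x₂ r₂ → f₂ x = 0) →
      ∀ t : ℝ, 0 < t →
        ‖(inner ℂ (Ψ (t : ℂ) f₁) f₂ : ℂ)‖ ≤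
          C * Real.exp (a * t) *
            Real.exp (-(setDist (Metric.ball x₁ r₁) (Metric.ball x₂ r₂)) ^ 2 / (4 * t)) *
            ‖f₁‖ * ‖f₂‖) :
    ∀ (x₁ x₂ : M) (r₁ r₂ : ℝ) (f₁ f₂ : Lp ℂ 2 μ),
      (∀ᵐ x ∂μ, x ∉ Metric.ball x₁ r₁ → f₁ x = 0) →
      (∀ᵐ x ∂μ, x ∉ Metric.ball x₂ r₂ → f₂ x = 0) →
      ∀ t : ℝ, 0 < t →
        ‖(inner ℂ (Ψ (t : ℂ) f₁) f₂ : ℂ)‖ ≤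
          Real.exp (-(setDist (Metric.ball x₁ r₁) (Metric.ball x₂ r₂)) ^ 2 / (4 * t)) *
            ‖f₁‖ * ‖f₂‖ := by
  intro x₁ x₂ r₁ r₂ f₁ f₂ h₁ h₂ t ht
  set r := setDist (Metric.ball x₁ r₁) (Metric.ball x₂ r₂)
  -- `z ↦ ⟪Ψ z f₁, f₂⟫` is antiholomorphic, so we work with its conjugate.
  set F : ℂ → ℂ := fun z => inner ℂ f₂ (Ψ z f₁)
  have hd : DifferentiableOn ℂ F {z | 0 < z.re} :=
    (innerSL ℂ f₂).differentiable.comp_differentiableOn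
      (hΨanal.clm_apply (differentiableOn_const f₁))
  have hb (z : ℂ) (hz : 0 < z.re) : ‖F z‖ ≤ ‖f₁‖ * ‖f₂‖ :=
    calc ‖F z‖ ≤ ‖f₂‖ * ‖Ψ z f₁‖ := norm_inner_le_norm _ _
      _ ≤ ‖f₂‖ * (1 * ‖f₁‖) := by gcongr; exact (Ψ z).le_of_opNorm_le (hΨcontr z hz) f₁
      _ = ‖f₁‖ * ‖f₂‖ := by ring
  have hexp (s : ℝ) : -r ^ 2 / (4 * s) = -(r ^ 2 / 4) / s := by ring
  have hO : (fun s : ℝ => F s) =O[𝓝[>] 0] fun s => Real.exp (-(r ^ 2 / 4) / s) := by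
    refine isBigO_exp_neg_div_of_norm_le (K := C * ‖f₁‖ * ‖f₂‖) (a := a) fun s hs => ?_
    calc ‖F s‖ = ‖(inner ℂ (Ψ (s : ℂ) f₁) f₂ : ℂ)‖ := norm_inner_symm _ _
      _ ≤ _ := hweak x₁ x₂ r₁ r₂ f₁ f₂ h₁ h₂ s hs
      _ = _ := by rw [hexp]; ring
  have hF := norm_le_mul_exp_neg_div_of_isBigO hd hb hO ht
  rw [norm_inner_symm, hexp]
  linarith

/-- Self-improvement of Davies–Gaffney estimates: if `{Ψ(z) : Re z > 0}` is an analytic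
family of bounded operators on `L²(M, μ)` with `‖Ψ(z)‖_{2→2} ≤ 1`, and for some `C ≥ 1`,
`a > 0` one has `|⟨Ψ(t)f₁, f₂⟩| ≤ C·e^{at}·e^{-r²/(4t)}·‖f₁‖₂‖f₂‖₂` whenever `f₁, f₂` are
supported in balls at mutual distance `r`, then in fact
`|⟨Ψ(t)f₁, f₂⟩| ≤ e^{-r²/(4t)}·‖f₁‖₂‖f₂‖₂`, i.e. the Davies–Gaffney estimate holds with
constant `1` and no exponential growth factor. -/
theorem davies_gaffney_self_improvement
    {M : Type*} [MetricSpace M] [TopologicalSpace.SeparableSpace M]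
    [MeasurableSpace M] [BorelSpace M] (μ : Measure M)
    (Ψ : ℂ → (Lp ℂ 2 μ →L[ℂ] Lp ℂ 2 μ))
    (C a : ℝ) (hC : 1 ≤ C) (ha : 0 < a)
    (hΨanal : DifferentiableOn ℂ Ψ {z : ℂ | 0 < z.re})
    (hΨcontr : ∀ z : ℂ, 0 < z.re → ‖Ψ z‖ ≤ 1)
    (hweak : ∀ (x₁ x₂ : M) (r₁ r₂ : ℝ) (f₁ f₂ : Lp ℂ 2 μ),
      (∀ᵐ x ∂μ, x ∉ Metric.ball x₁ r₁ → f₁ x = 0) →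
      (∀ᵐ x ∂μ, x ∉ Metric.ball x₂ r₂ → f₂ x = 0) →
      ∀ t : ℝ, 0 < t →
        ‖(inner ℂ (Ψ (t : ℂ) f₁) f₂ : ℂ)‖ ≤
          C * Real.exp (a * t) *
            Real.exp (-(setDist (Metric.ball x₁ r₁) (Metric.ball x₂ r₂)) ^ 2 / (4 * t)) *
            ‖f₁‖ * ‖f₂‖) :
    ∀ (x₁ x₂ : M) (r₁ r₂ : ℝ) (f₁ f₂ : Lp ℂ 2 μ),
      (∀ᵐ x ∂μ, x ∉ Metric.ball x₁ r₁ → f₁ x = 0) →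
      (∀ᵐ x ∂μ, x ∉ Metric.ball x₂ r₂ → f₂ x = 0) →
      ∀ t : ℝ, 0 < t →
        ‖(inner ℂ (Ψ (t : ℂ) f₁) f₂ : ℂ)‖ ≤
          Real.exp (-(setDist (Metric.ball x₁ r₁) (Metric.ball x₂ r₂)) ^ 2 / (4 * t)) *
            ‖f₁‖ * ‖f₂‖ :=
  davies_gaffney_self_improvement_general μ Ψ C a hΨanal hΨcontr hweak
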